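/- arXiv:1407.4711 — 6 statements merged into one kernel-verified Lean document; each statement's English description precedes it below -/
import Mathlib

section
/- There exists a strategy S (namely: each player points at the hat on his own head in the position of the first white hat on the partner's head, defaulting to hat 0 if the partner has no white hat) such that for every p ∈ [0,1], V_S(p) = p/(2-p). In particular, V(p) ≥ p/(2-p) for all p ∈ [0,1]. -/
open MeasureTheory ENNReal

/-- `μ` is the i.i.d. Bernoulli(`p`) product measure on `ℕ → Bool`
(`true` = white), characterized by its values on cylinder sets. -/
def IsBernoulliProduct (p : ℝ) (μ : Measure (ℕ → Bool)) : Prop :=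
  IsProbabilityMeasure μ ∧
    ∀ (s : Finset ℕ) (c : ℕ → Bool),
      μ {x | ∀ n ∈ s, x n = c n} =
        ∏ n ∈ s, (if c n = true then ENNReal.ofReal p else ENNReal.ofReal (1 - p))

/-- A strategy: a pair of measurable functions, each taking the partner's
hat configuration to the index of the hat the player points at. -/
structure Strategy where
  f₁ : (ℕ → Bool) → ℕ
  f₂ : (ℕ → Bool) → ℕ
  meas₁ : Measurable f₁
  meas₂ : Measurable f₂

/-- The winning probability of a strategy, when each player's hats are
distributed according to `μ`, independently. -/
noncomputable def winProb (S : Strategy) (μ : Measure (ℕ → Bool)) : ℝ :=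
  ((μ.prod μ) {x : (ℕ → Bool) × (ℕ → Bool) |
    x.1 (S.f₁ x.2) = true ∧ x.2 (S.f₂ x.1) = true}).toReal

/-- The value of the game: supremum of winning probabilities over all strategies. -/
noncomputable def gameValue (μ : Measure (ℕ → Bool)) : ℝ :=
  ⨆ S : Strategy, winProb S μ

/-- The index of the first white (`true`) hat, defaulting to `0` if there is none. -/
noncomputable def firstWhite (x : ℕ → Bool) : ℕ :=
  haveI := Classical.dec (∃ n, x n = true)
  if h : ∃ n, x n = true then Nat.find h else 0

/-! Under the first-white strategy both players win exactly when the first white hats of the two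
stacks sit at the same position `i`: each player's hat at the partner's first-white position is
white, so each first-white index is at most the other. For one stack the first white hat is at `i`
with probability `p (1 - p) ^ i`, so by independence the winning probability is
`∑ p² (1 - p) ^ (2 i) = p² / (1 - (1 - p)²) = p / (2 - p)`. -/

open Function

def firstWhiteAt (i : ℕ) : Set (ℕ → Bool) := {x | x i = true ∧ ∀ k < i, x k = false}

lemma firstWhite_eq_find {x : ℕ → Bool} (h : ∃ n, x n = true) : firstWhite x = Nat.find h :=
  dif_pos h

lemma firstWhite_le {x : ℕ → Bool} {n : ℕ} (h : x n = true) : firstWhite x ≤ n := by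
  rw [firstWhite_eq_find ⟨n, h⟩]
  exact Nat.find_le h

lemma mem_firstWhiteAt_iff {x : ℕ → Bool} {i : ℕ} :
    x ∈ firstWhiteAt i ↔ firstWhite x = i ∧ x i = true := by
  refine ⟨fun ⟨hi, hlt⟩ => ⟨?_, hi⟩, fun ⟨hx, hi⟩ => ⟨hi, fun k hk => ?_⟩⟩
  · rw [firstWhite_eq_find ⟨i, hi⟩, Nat.find_eq_iff]
    simpa using ⟨hi, hlt⟩
  · rw [firstWhite_eq_find ⟨i, hi⟩] at hx
    exact Bool.eq_false_iff.2 (Nat.find_min ⟨i, hi⟩ (hx ▸ hk))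

lemma firstWhite_eq_iff {x : ℕ → Bool} {i : ℕ} :
    firstWhite x = i ↔ x ∈ firstWhiteAt i ∨ (i = 0 ∧ ∀ n, x n = false) := by
  by_cases hx : ∃ n, x n = true
  · have hne : ¬ ∀ n, x n = false := fun h => by simp_all
    rw [mem_firstWhiteAt_iff]
    constructor
    · rintro rfl
      exact Or.inl ⟨rfl, by rw [firstWhite_eq_find hx]; exact Nat.find_spec hx⟩
    · rintro (h | h)
      · exact h.1
      · exact absurd h.2 hne
  · have h0 : firstWhite x = 0 := dif_neg hx
    simp only [not_exists, Bool.not_eq_true] at hx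
    simp [h0, mem_firstWhiteAt_iff, hx, eq_comm]

lemma measurableSet_firstWhiteAt (i : ℕ) : MeasurableSet (firstWhiteAt i) := by
  unfold firstWhiteAt
  measurability

lemma measurable_firstWhite : Measurable firstWhite := by
  refine measurable_to_countable' fun i => ?_
  have : firstWhite ⁻¹' {i} = firstWhiteAt i ∪ {x | i = 0 ∧ ∀ n, x n = false} := by
    ext x
    exact firstWhite_eq_iff
  rw [this]
  refine (measurableSet_firstWhiteAt i).union ?_
  measurability

lemma IsBernoulliProduct.measure_firstWhiteAt {p : ℝ} {μ : Measure (ℕ → Bool)}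
    (h : IsBernoulliProduct p μ) (i : ℕ) :
    μ (firstWhiteAt i) = ENNReal.ofReal (1 - p) ^ i * ENNReal.ofReal p := by
  have hcyl : firstWhiteAt i = {x | ∀ n ∈ Finset.range (i + 1), x n = decide (n = i)} := by
    ext x
    simp only [firstWhiteAt, Set.mem_ofPred_eq, Finset.mem_range, Nat.lt_succ_iff_lt_or_eq,
      or_imp, forall_and, forall_eq, decide_true]
    refine and_comm.trans (and_congr_left' (forall₂_congr fun k hk => ?_))
    simp [hk.ne]
  rw [hcyl, h.2, Finset.prod_range_succ, Finset.prod_congr rfl fun n hn =>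
    if_neg (by simpa using (Finset.mem_range.1 hn).ne), Finset.prod_const, Finset.card_range]
  simp

lemma firstWhite_win_iff (x y : ℕ → Bool) :
    x (firstWhite y) = true ∧ y (firstWhite x) = true ↔
      ∃ i, x ∈ firstWhiteAt i ∧ y ∈ firstWhiteAt i := by
  simp only [mem_firstWhiteAt_iff]
  constructor
  · rintro ⟨hx, hy⟩
    have heq : firstWhite x = firstWhite y := (firstWhite_le hx).antisymm (firstWhite_le hy)
    exact ⟨firstWhite x, ⟨rfl, heq ▸ hx⟩, heq.symm, hy⟩
  · rintro ⟨i, ⟨rfl, hx⟩, hyx, hy⟩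
    exact ⟨hyx ▸ hx, hy⟩

lemma pairwise_disjoint_firstWhiteAt : Pairwise (Disjoint on firstWhiteAt) := by
  intro i j hij
  refine Set.disjoint_left.2 fun x hi hj => hij ?_
  exact (mem_firstWhiteAt_iff.1 hi).1.symm.trans (mem_firstWhiteAt_iff.1 hj).1

noncomputable def firstWhiteStrategy : Strategy :=
  ⟨firstWhite, firstWhite, measurable_firstWhite, measurable_firstWhite⟩

lemma toReal_sq_mul_inv_one_sub_sq {p : ℝ} (hp0 : 0 ≤ p) (hp1 : p ≤ 1) :
    (ENNReal.ofReal p ^ 2 * (1 - ENNReal.ofReal (1 - p) ^ 2)⁻¹).toReal = p / (2 - p) := by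
  rcases hp0.eq_or_lt with rfl | hp
  · simp -- `0 * ⊤ = 0` in `ℝ≥0∞`
  have h2p : 0 < 2 - p := by linarith
  rw [← ENNReal.ofReal_pow (sub_nonneg.2 hp1), ← ENNReal.ofReal_one,
    ← ENNReal.ofReal_sub _ (sq_nonneg _), show 1 - (1 - p) ^ 2 = p * (2 - p) by ring,
    ← ENNReal.ofReal_inv_of_pos (by positivity), ← ENNReal.ofReal_pow hp0,
    ← ENNReal.ofReal_mul (by positivity), ENNReal.toReal_ofReal (by positivity)]
  field_simp

lemma winProb_firstWhiteStrategy {p : ℝ} {μ : Measure (ℕ → Bool)}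
    (h : IsBernoulliProduct p μ) (hp0 : 0 ≤ p) (hp1 : p ≤ 1) : winProb firstWhiteStrategy μ = p / (2 - p) := by
  have := h.1
  have hwin : {z : (ℕ → Bool) × (ℕ → Bool) |
      z.1 (firstWhite z.2) = true ∧ z.2 (firstWhite z.1) = true} =
        ⋃ i, firstWhiteAt i ×ˢ firstWhiteAt i := by
    ext ⟨x, y⟩
    simpa using firstWhite_win_iff x y
  have hdisj : Pairwise (Disjoint on fun i => firstWhiteAt i ×ˢ firstWhiteAt i) :=
    fun i j hij => Set.disjoint_prod.2 (Or.inl (pairwise_disjoint_firstWhiteAt hij))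
  rw [winProb, firstWhiteStrategy, hwin, measure_iUnion hdisj fun i =>
    (measurableSet_firstWhiteAt i).prod (measurableSet_firstWhiteAt i)]
  have hterm (i : ℕ) : μ (firstWhiteAt i) * μ (firstWhiteAt i)
      = (ENNReal.ofReal (1 - p) ^ 2) ^ i * ENNReal.ofReal p ^ 2 := by
    rw [h.measure_firstWhiteAt]
    ring
  simp only [Measure.prod_prod, hterm]
  rw [ENNReal.tsum_mul_right, ENNReal.tsum_geometric, mul_comm]
  exact toReal_sq_mul_inv_one_sub_sq hp0 hp1

lemma winProb_le_gameValue (S : Strategy) (μ : Measure (ℕ → Bool)) [IsProbabilityMeasure μ] :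
    winProb S μ ≤ gameValue μ := by
  refine le_ciSup (f := fun T => winProb T μ) ⟨1, ?_⟩ S
  rintro _ ⟨T, rfl⟩
  exact ENNReal.toReal_le_of_le_ofReal zero_le_one (by simpa using prob_le_one)

/-- There is a strategy (each player points at the position of the first white hat
on the partner's head) whose winning probability is `p / (2 - p)` for every
`p ∈ [0,1]`; consequently `V p ≥ p / (2 - p)`. -/
theorem first_white_strategy
    (μ : ℝ → Measure (ℕ → Bool))
    (hμ : ∀ p ∈ Set.Icc (0 : ℝ) 1, IsBernoulliProduct p (μ p)) :
    ∃ S : Strategy,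
      S.f₁ = firstWhite ∧ S.f₂ = firstWhite ∧
      (∀ p ∈ Set.Icc (0 : ℝ) 1, winProb S (μ p) = p / (2 - p)) ∧
      (∀ p ∈ Set.Icc (0 : ℝ) 1, p / (2 - p) ≤ gameValue (μ p)) := by
  have hwin : ∀ p ∈ Set.Icc (0 : ℝ) 1, winProb firstWhiteStrategy (μ p) = p / (2 - p) :=
    fun p hp => winProb_firstWhiteStrategy (hμ p hp) hp.1 hp.2
  refine ⟨firstWhiteStrategy, rfl, rfl, hwin, fun p hp => ?_⟩
  have := (hμ p hp).1
  exact hwin p hp ▸ winProb_le_gameValue _ _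
end

section
/- There exists a strategy S (namely: each player points at the hat on his own head in the position of the first black hat on the partner's head, defaulting to hat 0 if the partner has no black hat) such that for every p ∈ [0,1], V_S(p) = 2p²/(1+p). In particular, V(p) ≥ 2p²/(1+p) for all p ∈ [0,1]. -/
open MeasureTheory ENNReal

/-- The index of the first black (`false`) hat, defaulting to `0` if there is none. -/
noncomputable def firstBlack (x : ℕ → Bool) : ℕ :=
  haveI := Classical.dec (∃ n, x n = false)
  if h : ∃ n, x n = false then Nat.find h else 0

/-!
Let `k` and `l` be the positions of the first black hats of the two players. If `k = l` both
point at a black hat; if `k ≠ l`, say `k < l`, player 2's hat `k` is white by minimality of `l`,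
so they win exactly when player 1's hat `l` is white. By independence of the coordinates this
cell has probability `p ^ (k + l + 1) * (1 - p) ^ 2`, and summing over `k ≠ l` (all pairs minus
the diagonal) gives `p - p (1 - p) / (1 + p) = 2 p² / (1 + p)`. For `p < 1` some hat is black
almost surely, so these cells exhaust the winning event; for `p = 1` all hats are white almost
surely and the players always win.
-/

lemma hasSum_offDiag_geometric {p : ℝ} (hp0 : 0 ≤ p) (hp1 : p < 1) :
    HasSum (fun kl : ℕ × ℕ => if kl.1 = kl.2 then 0 else p ^ (kl.1 + kl.2 + 1) * (1 - p) ^ 2)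
      (2 * p ^ 2 / (1 + p)) := by
  set c := p * (1 - p) ^ 2
  have hgeom := hasSum_geometric_of_lt_one hp0 hp1
  have hall : HasSum (fun kl : ℕ × ℕ => c * (p ^ kl.1 * p ^ kl.2))
      (c * ((1 - p)⁻¹ * (1 - p)⁻¹)) :=
    (hgeom.mul hgeom (hgeom.summable.mul_of_nonneg hgeom.summable
      (fun _ => by positivity) (fun _ => by positivity))).mul_left c
  have hdiag : HasSum (fun kl : ℕ × ℕ => if kl.1 = kl.2 then c * (p ^ kl.1 * p ^ kl.2) else 0)
      (c * (1 - p ^ 2)⁻¹) := by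
    have hinj : Function.Injective fun k : ℕ => (k, k) := fun a b h => (Prod.mk.inj h).1
    rw [← hinj.hasSum_iff]
    · have hcomp : (fun kl : ℕ × ℕ => if kl.1 = kl.2 then c * (p ^ kl.1 * p ^ kl.2) else 0) ∘
          (fun k => (k, k)) = fun k => c * (p ^ 2) ^ k := by
        funext k
        simp [← pow_add, ← pow_mul, two_mul]
      rw [hcomp]
      exact (hasSum_geometric_of_lt_one (sq_nonneg p) (by nlinarith)).mul_left c
    · rintro ⟨a, b⟩ hab
      exact if_neg fun h : a = b => hab ⟨a, by rw [h]⟩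
  have hvalue : c * ((1 - p)⁻¹ * (1 - p)⁻¹) - c * (1 - p ^ 2)⁻¹ = 2 * p ^ 2 / (1 + p) := by
    have : 1 - p ≠ 0 := by linarith
    have : 1 + p ≠ 0 := by linarith
    rw [show 1 - p ^ 2 = (1 - p) * (1 + p) by ring]
    field_simp
    ring
  have hoffDiag :
      (fun kl : ℕ × ℕ => if kl.1 = kl.2 then 0 else p ^ (kl.1 + kl.2 + 1) * (1 - p) ^ 2) =
        fun kl => c * (p ^ kl.1 * p ^ kl.2) -
          if kl.1 = kl.2 then c * (p ^ kl.1 * p ^ kl.2) else 0 := by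
    funext kl
    split_ifs <;> ring
  rw [hoffDiag, ← hvalue]
  exact hall.sub hdiag

lemma ae_prod_of_ae_of_ae {α β : Type*} [MeasurableSpace α] [MeasurableSpace β]
    {μ : Measure α} {ν : Measure β} {P : α → Prop} {Q : β → Prop}
    (hP : ∀ᵐ x ∂μ, P x) (hQ : ∀ᵐ y ∂ν, Q y) : ∀ᵐ z ∂μ.prod ν, P z.1 ∧ Q z.2 :=
  (Measure.quasiMeasurePreserving_fst.ae hP).and (Measure.quasiMeasurePreserving_snd.ae hQ)

lemma exists_black_or_allWhite (x : ℕ → Bool) : ∃ n, x n = false ∨ ∀ m, x m = true := by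
  by_cases h : ∃ n, x n = false
  · obtain ⟨n, hn⟩ := h
    exact ⟨n, Or.inl hn⟩
  · exact ⟨0, Or.inr (by simpa using h)⟩

-- With the default branch replaced by "all hats white" the search becomes total, so that
-- `measurable_find` applies.
open Classical in
lemma firstBlack_eq_find (x : ℕ → Bool) :
    firstBlack x = Nat.find (exists_black_or_allWhite x) := by
  unfold firstBlack
  split_ifs with h
  · have : ¬ ∀ m, x m = true := fun hw => by
      obtain ⟨n, hn⟩ := h
      simp [hw n] at hn
    exact Nat.find_congr' (by simp [this])
  · exact ((Nat.find_eq_zero _).2 (Or.inr (by simpa using h))).symm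

lemma measurable_firstBlack : Measurable firstBlack := by
  classical
  rw [funext firstBlack_eq_find]
  refine measurable_find _ fun k => measurableSet_setOfPred.2 ?_
  fun_prop

def firstBlackAt (k : ℕ) : Set (ℕ → Bool) := {x | x k = false ∧ ∀ i < k, x i = true}

lemma firstBlack_eq_of_mem_firstBlackAt {x : ℕ → Bool} {k : ℕ} (hx : x ∈ firstBlackAt k) :
    firstBlack x = k := by
  have h : ∃ n, x n = false := ⟨k, hx.1⟩
  rw [firstBlack, dif_pos h, Nat.find_eq_iff]
  exact ⟨hx.1, fun m hm => by simp [hx.2 m hm]⟩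

lemma mem_firstBlackAt_firstBlack {x : ℕ → Bool} (h : ∃ n, x n = false) :
    x ∈ firstBlackAt (firstBlack x) := by
  rw [firstBlack, dif_pos h]
  exact ⟨Nat.find_spec h, fun i hi => by simpa using Nat.find_min h hi⟩

lemma measurableSet_firstBlackAt (k : ℕ) : MeasurableSet (firstBlackAt k) :=
  measurableSet_setOfPred.2 (by fun_prop)

noncomputable def firstBlackStrategy : Strategy :=
  ⟨firstBlack, firstBlack, measurable_firstBlack, measurable_firstBlack⟩

def firstBlackWin : Set ((ℕ → Bool) × (ℕ → Bool)) :=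
  {z | z.1 (firstBlack z.2) = true ∧ z.2 (firstBlack z.1) = true}

def winCell (k l : ℕ) : Set ((ℕ → Bool) × (ℕ → Bool)) :=
  (firstBlackAt k ∩ {x | x l = true}) ×ˢ (firstBlackAt l ∩ {x | x k = true})

lemma measurableSet_winCell (k l : ℕ) : MeasurableSet (winCell k l) :=
  ((measurableSet_firstBlackAt k).inter (measurableSet_setOfPred.2 (by fun_prop))).prod
    ((measurableSet_firstBlackAt l).inter (measurableSet_setOfPred.2 (by fun_prop)))

lemma pairwise_disjoint_winCell :
    Pairwise (Function.onFun Disjoint fun kl : ℕ × ℕ => winCell kl.1 kl.2) := by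
  rintro ⟨k, l⟩ ⟨k', l'⟩ hne
  refine Set.disjoint_left.2 fun z hz hz' => hne ?_
  rw [Prod.mk.injEq]
  exact ⟨(firstBlack_eq_of_mem_firstBlackAt hz.1.1).symm.trans
      (firstBlack_eq_of_mem_firstBlackAt hz'.1.1),
    (firstBlack_eq_of_mem_firstBlackAt hz.2.1).symm.trans
      (firstBlack_eq_of_mem_firstBlackAt hz'.2.1)⟩

lemma mem_iUnion_winCell_iff {z : (ℕ → Bool) × (ℕ → Bool)} (h₁ : ∃ n, z.1 n = false)
    (h₂ : ∃ n, z.2 n = false) : z ∈ ⋃ kl : ℕ × ℕ, winCell kl.1 kl.2 ↔ z ∈ firstBlackWin := by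
  constructor
  · rintro ⟨_, ⟨⟨k, l⟩, rfl⟩, ⟨hk, hl₁⟩, ⟨hl, hk₂⟩⟩
    exact ⟨firstBlack_eq_of_mem_firstBlackAt hl ▸ hl₁, firstBlack_eq_of_mem_firstBlackAt hk ▸ hk₂⟩
  · rintro ⟨hw₁, hw₂⟩
    exact Set.mem_iUnion.2 ⟨(firstBlack z.1, firstBlack z.2),
      ⟨mem_firstBlackAt_firstBlack h₁, hw₁⟩, ⟨mem_firstBlackAt_firstBlack h₂, hw₂⟩⟩

namespace IsBernoulliProduct

variable {p : ℝ} {μ : Measure (ℕ → Bool)}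

lemma measure_black_white (hμ : IsBernoulliProduct p μ) {k : ℕ} {t : Finset ℕ} (hk : k ∉ t) :
    μ {x | x k = false ∧ ∀ n ∈ t, x n = true} =
      ENNReal.ofReal p ^ t.card * ENNReal.ofReal (1 - p) := by
  have hset : {x : ℕ → Bool | x k = false ∧ ∀ n ∈ t, x n = true} =
      {x | ∀ n ∈ insert k t, x n = (n != k)} := by
    ext x
    simp only [Set.mem_ofPred_eq, Finset.mem_insert, forall_eq_or_imp, bne_self_eq_false]
    refine and_congr_right fun _ => forall₂_congr fun n hn => ?_
    rw [bne_iff_ne.2 (ne_of_mem_of_not_mem hn hk)]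
  rw [hset, hμ.2, Finset.prod_insert hk, mul_comm,
    Finset.prod_congr rfl (g := fun _ => ENNReal.ofReal p), Finset.prod_const]
  · simp
  · intro n hn
    simp [ne_of_mem_of_not_mem hn hk]

lemma measure_firstBlackAt_inter_white (hμ : IsBernoulliProduct p μ) {k l : ℕ} (hkl : k ≠ l) :
    μ (firstBlackAt k ∩ {x | x l = true}) =
      ENNReal.ofReal p ^ (insert l (Finset.range k)).card * ENNReal.ofReal (1 - p) := by
  have hset : firstBlackAt k ∩ {x | x l = true} =
      {x | x k = false ∧ ∀ n ∈ insert l (Finset.range k), x n = true} := by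
    ext x
    simp only [firstBlackAt, Set.mem_inter_iff, Set.mem_ofPred_eq, Finset.mem_insert,
      Finset.mem_range, forall_eq_or_imp]
    tauto
  rw [hset, hμ.measure_black_white (by simp [hkl])]

lemma measure_winCell (hμ : IsBernoulliProduct p μ) (hp0 : 0 ≤ p) (hp1 : p ≤ 1) (k l : ℕ) :
    (μ.prod μ) (winCell k l) =
      ENNReal.ofReal (if k = l then 0 else p ^ (k + l + 1) * (1 - p) ^ 2) := by
  have := hμ.1
  rw [winCell, Measure.prod_prod]
  rcases eq_or_ne k l with rfl | hkl
  · have hempty : firstBlackAt k ∩ {x | x k = true} = ∅ :=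
      Set.eq_empty_iff_forall_notMem.2 fun x ⟨⟨hb, _⟩, hw⟩ => by simp [hb] at hw
    simp [hempty]
  · have hcard :
        (insert l (Finset.range k)).card + (insert k (Finset.range l)).card = k + l + 1 := by
      rcases hkl.lt_or_gt with h | h <;>
        simp [Finset.card_insert_of_notMem, h, h.not_gt] <;> omega
    rw [hμ.measure_firstBlackAt_inter_white hkl, hμ.measure_firstBlackAt_inter_white hkl.symm,
      if_neg hkl, ENNReal.ofReal_mul (by positivity), ENNReal.ofReal_pow hp0,
      ENNReal.ofReal_pow (by linarith), ← hcard, pow_add]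
    ring

lemma ae_exists_black (hμ : IsBernoulliProduct p μ) (hp1 : p < 1) :
    ∀ᵐ x ∂μ, ∃ n, x n = false := by
  rw [ae_iff]
  refine nonpos_iff_eq_zero.1 (ge_of_tendsto'
    (ENNReal.tendsto_pow_atTop_nhds_zero_of_lt_one (ENNReal.ofReal_lt_one.2 hp1)) fun N => ?_)
  calc μ {x | ¬∃ n, x n = false}
      ≤ μ {x | ∀ n ∈ Finset.range N, x n = (fun _ => true) n} :=
        measure_mono fun x hx n _ => by simpa using not_exists.1 hx n
    _ = ENNReal.ofReal p ^ N := by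
      rw [hμ.2]
      simp

lemma ae_allWhite (hμ : IsBernoulliProduct 1 μ) : ∀ᵐ x ∂μ, ∀ n, x n = true :=
  ae_all_iff.2 fun n => by
    rw [ae_iff]
    simpa using hμ.2 {n} (fun _ => false)

lemma measure_firstBlackWin_of_lt_one (hμ : IsBernoulliProduct p μ) (hp0 : 0 ≤ p) (hp1 : p < 1) :
    (μ.prod μ) firstBlackWin = ENNReal.ofReal (2 * p ^ 2 / (1 + p)) := by
  have := hμ.1
  have hblack := hμ.ae_exists_black hp1
  have hae : firstBlackWin =ᵐ[μ.prod μ] ⋃ kl : ℕ × ℕ, winCell kl.1 kl.2 :=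
    Filter.eventuallyEq_set.2 <| (ae_prod_of_ae_of_ae hblack hblack).mono
      fun z hz => (mem_iUnion_winCell_iff hz.1 hz.2).symm
  have hsum := hasSum_offDiag_geometric hp0 hp1
  rw [measure_congr hae, measure_iUnion pairwise_disjoint_winCell
      fun kl => measurableSet_winCell kl.1 kl.2, ← hsum.tsum_eq,
    ENNReal.ofReal_tsum_of_nonneg (fun kl => by split_ifs <;> positivity) hsum.summable]
  exact tsum_congr fun kl => hμ.measure_winCell hp0 hp1.le kl.1 kl.2

lemma measure_firstBlackWin_of_one (hμ : IsBernoulliProduct 1 μ) :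
    (μ.prod μ) firstBlackWin = 1 := by
  have := hμ.1
  have hae : firstBlackWin =ᵐ[μ.prod μ] Set.univ :=
    Filter.eventuallyEq_set.2 <| (ae_prod_of_ae_of_ae hμ.ae_allWhite hμ.ae_allWhite).mono
      fun z hz => iff_of_true ⟨hz.1 _, hz.2 _⟩ trivial
  rw [measure_congr hae, measure_univ]

lemma winProb_firstBlackStrategy (hμ : IsBernoulliProduct p μ) (hp : p ∈ Set.Icc (0 : ℝ) 1) :
    winProb firstBlackStrategy μ = 2 * p ^ 2 / (1 + p) := by
  suffices (μ.prod μ) firstBlackWin = ENNReal.ofReal (2 * p ^ 2 / (1 + p)) by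
    rw [← ENNReal.toReal_ofReal (div_nonneg (by positivity) (by linarith [hp.1])), ← this]
    rfl
  rcases hp.2.eq_or_lt with rfl | hp1
  · rw [hμ.measure_firstBlackWin_of_one]
    norm_num
  · exact hμ.measure_firstBlackWin_of_lt_one hp.1 hp1

end IsBernoulliProduct

lemma le_gameValue (μ : Measure (ℕ → Bool)) [IsProbabilityMeasure μ] (S : Strategy) :
    winProb S μ ≤ gameValue μ := by
  refine le_ciSup (f := fun S => winProb S μ) ⟨1, ?_⟩ S
  rintro _ ⟨T, rfl⟩
  exact ENNReal.toReal_le_of_le_ofReal zero_le_one (by simpa using prob_le_one)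

/-- There is a strategy (each player points at the position of the first black hat
on the partner's head) whose winning probability is `2p² / (1 + p)` for every
`p ∈ [0,1]`; consequently `V p ≥ 2p² / (1 + p)`. -/
theorem first_black_strategy
    (μ : ℝ → Measure (ℕ → Bool))
    (hμ : ∀ p ∈ Set.Icc (0 : ℝ) 1, IsBernoulliProduct p (μ p)) :
    ∃ S : Strategy,
      S.f₁ = firstBlack ∧ S.f₂ = firstBlack ∧
      (∀ p ∈ Set.Icc (0 : ℝ) 1, winProb S (μ p) = 2 * p ^ 2 / (1 + p)) ∧
      (∀ p ∈ Set.Icc (0 : ℝ) 1, 2 * p ^ 2 / (1 + p) ≤ gameValue (μ p)) := by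
  refine ⟨firstBlackStrategy, rfl, rfl, fun p hp => (hμ p hp).winProb_firstBlackStrategy hp,
    fun p hp => ?_⟩
  have := (hμ p hp).1
  rw [← (hμ p hp).winProb_firstBlackStrategy hp]
  exact le_gameValue (μ p) firstBlackStrategy
end

section
/- (Dual strategy lemma.) Let S = (f₁, f₂) be any strategy and let S^d = (f₁ᵈ, f₂ᵈ) be its dual, defined by fᵢᵈ(x) = fᵢ(fun n => ¬ x n) (i.e., S^d plays S with the roles of white and black exchanged). Then for every p ∈ [0,1], V_{S^d}(p) = 2p − 1 + V_S(1−p). -/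
open MeasureTheory ENNReal

/-- The dual of a strategy: play the original strategy with the roles of
white and black exchanged. -/
def Strategy.dual (S : Strategy) : Strategy where
  f₁ := fun x => S.f₁ fun n => !(x n)
  f₂ := fun x => S.f₂ fun n => !(x n)
  meas₁ := S.meas₁.comp <| measurable_pi_lambda _ fun n =>
    (measurable_of_countable not).comp (measurable_pi_apply n)
  meas₂ := S.meas₂.comp <| measurable_pi_lambda _ fun n =>
    (measurable_of_countable not).comp (measurable_pi_apply n)

/-!
Exchanging colours, `x ↦ xᶜ`, carries `μ_p` to `μ_{1-p}`, and `S.dual` wins at `(x₁, x₂)`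
exactly when, at `(x₁ᶜ, x₂ᶜ)`, neither player of `S` points at a white hat. Whatever `S` is,
each player points at a white hat with probability `1 - p` under `μ_{1-p}`, since his own stack
is independent of the stack he looks at; inclusion–exclusion then gives
`V_{S^d}(p) = 1 - 2(1 - p) + V_S(1 - p)`.
-/

section PointCylinders

variable {ι α : Type*}

def pointCylinders : Set (Set (ι → α)) :=
  {t | ∃ (s : Finset ι) (c : ι → α), t = {x | ∀ i ∈ s, x i = c i}}

theorem isPiSystem_pointCylinders : IsPiSystem (pointCylinders (ι := ι) (α := α)) := by
  classical
  rintro _ ⟨s, c, rfl⟩ _ ⟨t, d, rfl⟩ ⟨x₀, hx₀s, hx₀t⟩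
  -- a common point `x₀` can replace both `c` and `d`
  refine ⟨s ∪ t, x₀, ?_⟩
  ext x
  simp only [Set.mem_inter_iff, Set.mem_ofPred_eq, Finset.mem_union, or_imp, forall_and]
  exact and_congr (forall₂_congr fun i hi => by rw [hx₀s i hi])
    (forall₂_congr fun i hi => by rw [hx₀t i hi])

theorem measurableSet_setOf_forall_mem_eq [MeasurableSpace α] [MeasurableSingletonClass α]
    (s : Finset ι) (c : ι → α) : MeasurableSet {x : ι → α | ∀ i ∈ s, x i = c i} :=
  MeasurableSet.pi s.countable_toSet fun i _ => measurableSet_singleton (c i)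

theorem generateFrom_pointCylinders [MeasurableSpace α] [MeasurableSingletonClass α]
    [Countable α] :
    MeasurableSpace.generateFrom pointCylinders = MeasurableSpace.pi (X := fun _ : ι => α) := by
  refine le_antisymm (MeasurableSpace.generateFrom_le ?_) (iSup_le fun i => ?_)
  · rintro _ ⟨s, c, rfl⟩
    exact measurableSet_setOf_forall_mem_eq s c
  · refine Measurable.comap_le (@measurable_to_countable' _ _ _ _
      (MeasurableSpace.generateFrom pointCylinders) _ fun b =>
        MeasurableSpace.measurableSet_generateFrom ⟨{i}, fun _ => b, ?_⟩)
    ext x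
    simp

end PointCylinders

theorem measurable_compl_pi {ι : Type*} : Measurable (compl : (ι → Bool) → (ι → Bool)) :=
  measurable_pi_lambda _ fun i => (measurable_of_countable not).comp (measurable_pi_apply i)

theorem measurableSet_setOf_snd_apply_eq_true {β ι : Type*} [MeasurableSpace β]
    [MeasurableSpace ι] [Countable ι] [MeasurableSingletonClass ι] {g : β → ι}
    (hg : Measurable g) : MeasurableSet {z : β × (ι → Bool) | z.2 (g z.1) = true} :=
  (measurable_from_prod_countable_right (f := fun z : ι × (ι → Bool) => z.2 z.1)
    measurable_pi_apply).comp ((hg.comp measurable_fst).prodMk measurable_snd)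
      (measurableSet_singleton true)

namespace IsBernoulliProduct

variable {p : ℝ} {μ : Measure (ℕ → Bool)}

theorem unique {ν : Measure (ℕ → Bool)} (hμ : IsBernoulliProduct p μ)
    (hν : IsBernoulliProduct p ν) : μ = ν := by
  have := hμ.1; have := hν.1
  refine ext_of_generate_finite _ generateFrom_pointCylinders.symm isPiSystem_pointCylinders
    ?_ (by simp)
  rintro _ ⟨s, c, rfl⟩
  rw [hμ.2, hν.2]

theorem map_compl (h : IsBernoulliProduct p μ) : IsBernoulliProduct (1 - p) (μ.map compl) := by
  have := h.1
  refine ⟨Measure.isProbabilityMeasure_map measurable_compl_pi.aemeasurable, fun s c => ?_⟩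
  have hpre : compl ⁻¹' {x : ℕ → Bool | ∀ n ∈ s, x n = c n} = {x | ∀ n ∈ s, x n = cᶜ n} := by
    ext x
    exact forall₂_congr fun n _ => Bool.not_eq_eq_eq_not
  rw [Measure.map_apply measurable_compl_pi (measurableSet_setOf_forall_mem_eq s c), hpre, h.2]
  refine Finset.prod_congr rfl fun n _ => ?_
  rw [Pi.compl_apply]
  cases c n <;> simp

theorem measure_setOf_apply_eq_true (h : IsBernoulliProduct p μ) (n : ℕ) :
    μ {x | x n = true} = ENNReal.ofReal p := by
  simpa using h.2 {n} fun _ => true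

theorem measureReal_prod_setOf_apply_eq_true {β : Type*} [MeasurableSpace β] {ν : Measure β}
    [IsProbabilityMeasure ν] (h : IsBernoulliProduct p μ) (hp : 0 ≤ p) {g : β → ℕ}
    (hg : Measurable g) : (ν.prod μ).real {z | z.2 (g z.1) = true} = p := by
  have := h.1
  rw [measureReal_def, Measure.prod_apply (measurableSet_setOf_snd_apply_eq_true hg)]
  simp only [Set.preimage_ofPred_eq, h.measure_setOf_apply_eq_true]
  simp [hp]

end IsBernoulliProduct

namespace Strategy

variable (S : Strategy)

def hitsWhite₁ : Set ((ℕ → Bool) × (ℕ → Bool)) := {x | x.1 (S.f₁ x.2) = true}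

def hitsWhite₂ : Set ((ℕ → Bool) × (ℕ → Bool)) := {x | x.2 (S.f₂ x.1) = true}

theorem measurableSet_hitsWhite₂ : MeasurableSet S.hitsWhite₂ :=
  measurableSet_setOf_snd_apply_eq_true S.meas₂

theorem measurableSet_hitsWhite₁ : MeasurableSet S.hitsWhite₁ :=
  measurable_swap (measurableSet_setOf_snd_apply_eq_true S.meas₁)

theorem winProb_eq_measureReal_inter (μ : Measure (ℕ → Bool)) :
    winProb S μ = (μ.prod μ).real (S.hitsWhite₁ ∩ S.hitsWhite₂) :=
  rfl

variable {p : ℝ} {μ : Measure (ℕ → Bool)}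

theorem measureReal_hitsWhite₂ (h : IsBernoulliProduct p μ) (hp : 0 ≤ p) :
    (μ.prod μ).real S.hitsWhite₂ = p :=
  have := h.1
  h.measureReal_prod_setOf_apply_eq_true hp S.meas₂

theorem measureReal_hitsWhite₁ (h : IsBernoulliProduct p μ) (hp : 0 ≤ p) :
    (μ.prod μ).real S.hitsWhite₁ = p :=
  have := h.1
  (Measure.measurePreserving_swap.measureReal_preimage
    (measurableSet_setOf_snd_apply_eq_true S.meas₁).nullMeasurableSet).trans
      (h.measureReal_prod_setOf_apply_eq_true hp S.meas₁)

theorem setOf_dual_wins_eq_preimage :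
    {x : (ℕ → Bool) × (ℕ → Bool) | x.1 (S.dual.f₁ x.2) = true ∧ x.2 (S.dual.f₂ x.1) = true} =
      Prod.map compl compl ⁻¹' (S.hitsWhite₁ ∪ S.hitsWhite₂)ᶜ := by
  ext x
  simp only [Set.mem_preimage, Set.mem_compl_iff, Set.mem_union, not_or, Prod.map_fst,
    Prod.map_snd, hitsWhite₁, hitsWhite₂, Set.mem_ofPred_eq, Pi.compl_apply, Bool.compl_eq_bnot,
    Bool.not_eq_eq_eq_not, Bool.not_true, Bool.not_eq_false]
  rfl

theorem winProb_dual_of_measurePreserving {ν : Measure (ℕ → Bool)} [IsProbabilityMeasure μ]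
    [IsProbabilityMeasure ν] (h : MeasurePreserving compl μ ν) :
    winProb S.dual μ =
      1 - (ν.prod ν).real S.hitsWhite₁ - (ν.prod ν).real S.hitsWhite₂ + winProb S ν := by
  have hunion := S.measurableSet_hitsWhite₁.union S.measurableSet_hitsWhite₂
  have inclusion_exclusion := measureReal_union_add_inter (μ := ν.prod ν) (s := S.hitsWhite₁)
    S.measurableSet_hitsWhite₂
  rw [winProb, ← measureReal_def, setOf_dual_wins_eq_preimage,
    (h.prod h).measureReal_preimage hunion.compl.nullMeasurableSet,
    probReal_compl_eq_one_sub hunion, winProb_eq_measureReal_inter]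
  linarith

end Strategy

/-- The dual strategy lemma: `V_{S^d}(p) = 2p − 1 + V_S(1 − p)` for `p ∈ [0,1]`. -/
theorem dual_strategy_winProb (μ : ℝ → Measure (ℕ → Bool))
    (hμ : ∀ p ∈ Set.Icc (0 : ℝ) 1, IsBernoulliProduct p (μ p))
    (S : Strategy) :
    ∀ p ∈ Set.Icc (0 : ℝ) 1,
      winProb S.dual (μ p) = 2 * p - 1 + winProb S (μ (1 - p)) := by
  rintro p ⟨hp₀, hp₁⟩
  have hp := hμ p ⟨hp₀, hp₁⟩
  have hq := hμ (1 - p) ⟨by linarith, by linarith⟩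
  have := hp.1
  have := hq.1
  have hcompl : MeasurePreserving compl (μ p) (μ (1 - p)) :=
    ⟨measurable_compl_pi, hp.map_compl.unique hq⟩
  rw [S.winProb_dual_of_measurePreserving hcompl, S.measureReal_hitsWhite₁ hq (by linarith),
    S.measureReal_hitsWhite₂ hq (by linarith)]
  ring
end

section
/- For every p ∈ [0,1], the maximum over all 3-hat strategies (g₁, g₂) of the win probability in the 3-hat game with parameter p equals 3p² − 6p³ + 8p⁴ − 6p⁵ + 2p⁶ (so the same strategy is optimal for every p). -/
open MeasureTheory ENNReal

/-- The Bernoulli(`p`) measure on `Bool` (`true` = white with probability `p`). -/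
noncomputable def bern (p : ℝ) : Measure Bool :=
  ENNReal.ofReal p • Measure.dirac true + ENNReal.ofReal (1 - p) • Measure.dirac false

instance (p : ℝ) : IsFiniteMeasure (bern p) := by
  constructor
  simp [bern]

noncomputable def hat3 (p : ℝ) : Measure (Fin 3 → Bool) := Measure.pi fun _ => bern p

noncomputable def winProb3 (g₁ g₂ : (Fin 3 → Bool) → Fin 3) (p : ℝ) : ℝ :=
  (((hat3 p).prod (hat3 p)) {x : (Fin 3 → Bool) × (Fin 3 → Bool) |
    x.1 (g₁ x.2) = true ∧ x.2 (g₂ x.1) = true}).toReal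

/-!
Group the winning pairs `(x₁, x₂)` by their numbers `(a, b)` of white hats: each such pair has
probability `p^(a+b) (1-p)^(6-a-b)`, so it suffices to bound the number of winning pairs in each
of the 16 classes. Player 1's guess depends only on `x₂`, so each `x₂` of weight `b` wins with at
most `max_i #{x₁ of weight a | x₁ i white}` partners `x₁`; symmetrically for player 2. One explicit
strategy attains the smaller of the two bounds in every class at once, hence is optimal for all `p`.
-/

open Finset

lemma bern_singleton (p : ℝ) (b : Bool) :
    bern p {b} = ENNReal.ofReal (if b then p else 1 - p) := by
  cases b <;> simp [bern]

def whiteCount {n : ℕ} (x : Fin n → Bool) : Fin (n + 1) :=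
  ⟨#{i | x i = true}, Nat.lt_succ_of_le ((card_filter_le _ _).trans_eq (card_fin n))⟩

def configProb (n : ℕ) (p : ℝ) (k : ℕ) : ℝ := p ^ k * (1 - p) ^ (n - k)

lemma configProb_nonneg {p : ℝ} (hp : p ∈ Set.Icc (0 : ℝ) 1) (n k : ℕ) : 0 ≤ configProb n p k :=
  mul_nonneg (pow_nonneg hp.1 _) (pow_nonneg (sub_nonneg.2 hp.2) _)

lemma prod_ite_eq_pow_whiteCount {n : ℕ} (p : ℝ) (x : Fin n → Bool) :
    ∏ i, (if x i then p else 1 - p) = configProb n p (whiteCount x) := by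
  rw [prod_ite, prod_const, prod_const, configProb, whiteCount]
  congr
  have := card_filter_add_card_filter_not (s := univ) (fun i => x i = true)
  rw [card_univ, Fintype.card_fin] at this
  dsimp only
  omega

lemma pi_bern_singleton {n : ℕ} {p : ℝ} (hp : p ∈ Set.Icc (0 : ℝ) 1) (x : Fin n → Bool) :
    Measure.pi (fun _ => bern p) {x} =
      ENNReal.ofReal (configProb n p (whiteCount x)) := by
  rw [Measure.pi_singleton, ← prod_ite_eq_pow_whiteCount, ENNReal.ofReal_prod_of_nonneg]
  · simp only [bern_singleton]
  · intro i _
    split <;> linarith [hp.1, hp.2]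

section DoubleCounting

variable {ι : Type*} [Fintype ι] [DecidableEq ι]

def winSet (g₁ g₂ : (ι → Bool) → ι) : Finset ((ι → Bool) × (ι → Bool)) :=
  {z | z.1 (g₁ z.2) = true ∧ z.2 (g₂ z.1) = true}

def maxHits (A : Finset (ι → Bool)) : ℕ := univ.sup fun i => #{x ∈ A | x i = true}

lemma card_winSet_filter_le_left (g₁ g₂ : (ι → Bool) → ι) (A B : Finset (ι → Bool)) :
    #{z ∈ winSet g₁ g₂ | z.1 ∈ A ∧ z.2 ∈ B} ≤ maxHits A * #B := by
  refine card_le_mul_card_image_of_maps_to (f := Prod.snd) (by simp +contextual) _ fun y _ => ?_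
  calc #{z ∈ {z ∈ winSet g₁ g₂ | z.1 ∈ A ∧ z.2 ∈ B} | z.2 = y}
      ≤ #{x ∈ A | x (g₁ y) = true} := by
        refine card_le_card_of_injOn Prod.fst ?_ ?_
        · rintro ⟨x, y'⟩ hz
          simp only [winSet, coe_filter, mem_filter, mem_univ, true_and] at hz ⊢
          obtain ⟨⟨⟨hx, -⟩, hA, -⟩, rfl⟩ := hz
          exact ⟨hA, hx⟩
        · intro z hz w hw h
          simp_all [Prod.ext_iff]
    _ ≤ maxHits A := le_sup (f := fun i => #{x ∈ A | x i = true}) (mem_univ _)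

lemma card_winSet_filter_le_right (g₁ g₂ : (ι → Bool) → ι) (A B : Finset (ι → Bool)) :
    #{z ∈ winSet g₁ g₂ | z.1 ∈ A ∧ z.2 ∈ B} ≤ maxHits B * #A := by
  have hswap :
      #{z ∈ winSet g₁ g₂ | z.1 ∈ A ∧ z.2 ∈ B} = #{z ∈ winSet g₂ g₁ | z.1 ∈ B ∧ z.2 ∈ A} :=
    card_nbij' Prod.swap Prod.swap (fun z hz => by simp_all [winSet])
      (fun z hz => by simp_all [winSet]) (fun _ _ => rfl) (fun _ _ => rfl)
  exact hswap ▸ card_winSet_filter_le_left g₂ g₁ B A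

end DoubleCounting

section WeightClasses

variable {n : ℕ}

def layer (k : Fin (n + 1)) : Finset (Fin n → Bool) := {x | whiteCount x = k}

def winCount (g₁ g₂ : (Fin n → Bool) → Fin n) (a b : Fin (n + 1)) : ℕ :=
  #{z ∈ winSet g₁ g₂ | whiteCount z.1 = a ∧ whiteCount z.2 = b}

lemma winCount_le (g₁ g₂ : (Fin n → Bool) → Fin n) (a b : Fin (n + 1)) :
    winCount g₁ g₂ a b ≤
      min (maxHits (layer a) * #(layer b)) (maxHits (layer b) * #(layer a)) := by
  have h : winCount g₁ g₂ a b = #{z ∈ winSet g₁ g₂ | z.1 ∈ layer a ∧ z.2 ∈ layer b} := by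
    simp [winCount, layer]
  rw [h]
  exact le_min (card_winSet_filter_le_left ..) (card_winSet_filter_le_right ..)

lemma sum_winSet_eq_sum_winCount {M : Type*} [AddCommMonoid M]
    (g₁ g₂ : (Fin n → Bool) → Fin n) (f : Fin (n + 1) → Fin (n + 1) → M) :
    ∑ z ∈ winSet g₁ g₂, f (whiteCount z.1) (whiteCount z.2) =
      ∑ a, ∑ b, winCount g₁ g₂ a b • f a b := by
  rw [← sum_fiberwise' (winSet g₁ g₂) (fun z => (whiteCount z.1, whiteCount z.2))
    (fun ab => f ab.1 ab.2), Fintype.sum_prod_type]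
  simp [winCount, Prod.ext_iff]

end WeightClasses

lemma winProb3_eq_sum {p : ℝ} (hp : p ∈ Set.Icc (0 : ℝ) 1) (g₁ g₂ : (Fin 3 → Bool) → Fin 3) :
    winProb3 g₁ g₂ p = ∑ z ∈ winSet g₁ g₂,
      configProb 3 p (whiteCount z.1) * configProb 3 p (whiteCount z.2) := by
  have hset : {x : (Fin 3 → Bool) × (Fin 3 → Bool) |
      x.1 (g₁ x.2) = true ∧ x.2 (g₂ x.1) = true} = ↑(winSet g₁ g₂) := by
    ext; simp [winSet]
  rw [winProb3, hset, hat3, ← sum_measure_singleton, toReal_sum fun _ _ => measure_ne_top _ _]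
  refine sum_congr rfl fun z _ => ?_
  rw [← Set.singleton_prod_singleton, Measure.prod_prod, pi_bern_singleton hp,
    pi_bern_singleton hp, toReal_mul, toReal_ofReal (configProb_nonneg hp ..),
    toReal_ofReal (configProb_nonneg hp ..)]

def optimalGuess (x : Fin 3 → Bool) : Fin 3 :=
  if x 0 then (if x 1 then 0 else (if x 2 then 1 else 0))
  else (if x 1 then 2 else (if x 2 then 1 else 0))

lemma winCount_optimalGuess_ge (a b : Fin 4) :
    min (maxHits (layer a) * #(layer b)) (maxHits (layer b) * #(layer a)) ≤
      winCount optimalGuess optimalGuess a b := by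
  revert a b
  decide

lemma winCount_optimalGuess :
    winCount optimalGuess optimalGuess =
      ![![0, 0, 0, 0], ![0, 3, 3, 1], ![0, 3, 6, 2], ![0, 1, 2, 1]] := by
  decide

lemma winProb3_le_winProb3_optimalGuess {p : ℝ} (hp : p ∈ Set.Icc (0 : ℝ) 1)
    (g₁ g₂ : (Fin 3 → Bool) → Fin 3) :
    winProb3 g₁ g₂ p ≤ winProb3 optimalGuess optimalGuess p := by
  simp only [winProb3_eq_sum hp, sum_winSet_eq_sum_winCount _ _
    fun a b => configProb 3 p a * configProb 3 p b, nsmul_eq_mul]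
  gcongr with a _ b _
  · exact mul_nonneg (configProb_nonneg hp ..) (configProb_nonneg hp ..)
  · exact (winCount_le g₁ g₂ a b).trans (winCount_optimalGuess_ge a b)

lemma winProb3_optimalGuess {p : ℝ} (hp : p ∈ Set.Icc (0 : ℝ) 1) :
    winProb3 optimalGuess optimalGuess p =
      3 * p ^ 2 - 6 * p ^ 3 + 8 * p ^ 4 - 6 * p ^ 5 + 2 * p ^ 6 := by
  rw [winProb3_eq_sum hp, sum_winSet_eq_sum_winCount _ _
    fun a b => configProb 3 p a * configProb 3 p b, winCount_optimalGuess]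
  norm_num [Fin.sum_univ_succ, configProb]
  ring

/-- For every `p ∈ [0,1]`, the maximum winning probability over all 3-hat
strategies equals `3p² − 6p³ + 8p⁴ − 6p⁵ + 2p⁶`. -/
theorem three_hat_max (p : ℝ) (hp : p ∈ Set.Icc (0 : ℝ) 1) :
    IsGreatest
      (Set.range fun g : ((Fin 3 → Bool) → Fin 3) × ((Fin 3 → Bool) → Fin 3) =>
        winProb3 g.1 g.2 p)
      (3 * p ^ 2 - 6 * p ^ 3 + 8 * p ^ 4 - 6 * p ^ 5 + 2 * p ^ 6) := by
  rw [← winProb3_optimalGuess hp]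
  refine ⟨⟨(optimalGuess, optimalGuess), rfl⟩, ?_⟩
  rintro _ ⟨g, rfl⟩
  exact winProb3_le_winProb3_optimalGuess hp g.1 g.2
end

section
/- For every real p with 0 ≤ p ≤ 1/2, the strategy S₁ is the most successful of the three: F₂(p) ≤ F₁(p) and F₃(p) ≤ F₁(p), with equality of all three at p = 1/2 where F₁(1/2) = F₂(1/2) = F₃(1/2) = 7/20. -/
/-!
Both differences `F₁ - F₂` and `F₁ - F₃` factor with a simple root at `p = 1/2`:
`F₁ - F₂ = p⁴ (1 - 2p)(1 - p)(3 - 3p + 2p²) / ((1 + p)(2 - p)(1 + p²)(2 - 3p + 3p²))` and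
`F₁ - F₃ = p (1 - 2p)(1 - p)(1 - p + 2p³) / ((1 + p)²(2 - p)(1 + p²)(2 - 2p + p²))`.
Every other factor is positive on `[0, 1/2]`, and at `p = 1/2` all three values are `7/20`.
-/

/-- Win rate of strategy `S₁`. -/
noncomputable def F₁ (p : ℝ) : ℝ :=
  p * (1 + p + p ^ 2 + 3 * p ^ 3 - 3 * p ^ 4 + p ^ 5) /
    ((1 + p) * (2 - p) * (1 + p ^ 2))

/-- Win rate of strategy `S₂`. -/
noncomputable def F₂ (p : ℝ) : ℝ :=
  p * (1 - p + p ^ 2 + p ^ 3) / (2 - 3 * p + 3 * p ^ 2)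

/-- Win rate of strategy `S₃`. -/
noncomputable def F₃ (p : ℝ) : ℝ :=
  p * (1 + 5 * p - 10 * p ^ 2 + 10 * p ^ 3 - 5 * p ^ 4 + p ^ 5) /
    ((2 - 2 * p + p ^ 2) * (1 + p) * (2 - p))

lemma two_sub_three_mul_add_three_mul_sq_pos (p : ℝ) : 0 < 2 - 3 * p + 3 * p ^ 2 := by
  nlinarith [sq_nonneg (2 * p - 1)]

lemma two_sub_two_mul_add_sq_pos (p : ℝ) : 0 < 2 - 2 * p + p ^ 2 := by
  nlinarith [sq_nonneg (p - 1)]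

lemma F₁_sub_F₂ {p : ℝ} (h₁ : 1 + p ≠ 0) (h₂ : 2 - p ≠ 0) :
    F₁ p - F₂ p = p ^ 4 * (1 - 2 * p) * ((1 - p) * (3 - 3 * p + 2 * p ^ 2)) /
      ((1 + p) * (2 - p) * (1 + p ^ 2) * (2 - 3 * p + 3 * p ^ 2)) := by
  have hq := (two_sub_three_mul_add_three_mul_sq_pos p).ne'
  rw [F₁, F₂, div_sub_div _ _ (by positivity) hq]
  ring

lemma F₁_sub_F₃ {p : ℝ} (h₁ : 1 + p ≠ 0) (h₂ : 2 - p ≠ 0) :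
    F₁ p - F₃ p = p * (1 - 2 * p) * ((1 - p) * (1 - p + 2 * p ^ 3)) /
      ((1 + p) ^ 2 * (2 - p) * (1 + p ^ 2) * (2 - 2 * p + p ^ 2)) := by
  have hq := (two_sub_two_mul_add_sq_pos p).ne'
  rw [F₁, F₃, div_sub_div _ _ (by positivity) (by positivity), div_eq_div_iff (by positivity)
    (by positivity)]
  ring

lemma F₂_le_F₁ {p : ℝ} (hp₀ : 0 ≤ p) (hp : p ≤ 1 / 2) : F₂ p ≤ F₁ p := by
  have h₁ : 0 < 1 + p := by linarith
  have h₂ : 0 < 2 - p := by linarith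
  have h₃ : 0 < 3 - 3 * p + 2 * p ^ 2 := by nlinarith [sq_nonneg (4 * p - 3)]
  rw [← sub_nonneg, F₁_sub_F₂ h₁.ne' h₂.ne']
  refine div_nonneg (mul_nonneg (mul_nonneg (by positivity) (by linarith))
    (mul_nonneg (by linarith) h₃.le)) (mul_pos (mul_pos (mul_pos h₁ h₂) (by positivity))
    (two_sub_three_mul_add_three_mul_sq_pos p)).le

lemma F₃_le_F₁ {p : ℝ} (hp₀ : 0 ≤ p) (hp : p ≤ 1 / 2) : F₃ p ≤ F₁ p := by
  have h₁ : 0 < 1 + p := by linarith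
  have h₃ : 0 ≤ 1 - p + 2 * p ^ 3 := by nlinarith [pow_nonneg hp₀ 3]
  have h₂ : 0 < 2 - p := by linarith
  rw [← sub_nonneg, F₁_sub_F₃ h₁.ne' h₂.ne']
  refine div_nonneg (mul_nonneg (mul_nonneg hp₀ (by linarith)) (mul_nonneg (by linarith) h₃))
    (mul_pos (mul_pos (mul_pos (pow_pos h₁ 2) h₂) (by positivity))
    (two_sub_two_mul_add_sq_pos p)).le

/-- For `0 ≤ p ≤ 1/2`, `S₁` is the most successful of the three strategies, with
all three agreeing at `p = 1/2` where their value is `7/20`. -/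
theorem S1_best_below_half :
    (∀ p : ℝ, 0 ≤ p → p ≤ 1 / 2 → F₂ p ≤ F₁ p ∧ F₃ p ≤ F₁ p) ∧
    F₁ (1 / 2) = 7 / 20 ∧ F₂ (1 / 2) = 7 / 20 ∧ F₃ (1 / 2) = 7 / 20 :=
  ⟨fun _ hp₀ hp ↦ ⟨F₂_le_F₁ hp₀ hp, F₃_le_F₁ hp₀ hp⟩,
    by norm_num [F₁], by norm_num [F₂], by norm_num [F₃]⟩
end

section
/- For every real p with 1/2 ≤ p ≤ 1, the strategy S₃ is the most successful of the three: F₁(p) ≤ F₃(p) and F₂(p) ≤ F₃(p), with equality of all three at p = 1/2 where F₁(1/2) = F₂(1/2) = F₃(1/2) = 7/20. -/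
lemma two_sub_add_two_mul_sq_pos (p : ℝ) : 0 < 2 - p + 2 * p ^ 2 := by
  nlinarith [sq_nonneg (4 * p - 1)]

lemma F₃_sub_F₁ {p : ℝ} (hp₁ : 1 + p ≠ 0) (hp₂ : 2 - p ≠ 0) :
    F₃ p - F₁ p = p * (2 * p - 1) * (1 - p) * (p ^ 2 + (1 - p) ^ 2) /
      ((1 + p) * (2 - p) * (1 + p ^ 2) * (2 - 2 * p + p ^ 2)) := by
  have h₃ := (two_sub_two_mul_add_sq_pos p).ne'
  rw [F₃, F₁, div_sub_div _ _ (by positivity) (by positivity),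
    div_eq_div_iff (by positivity) (by positivity)]
  ring

lemma F₃_sub_F₂ {p : ℝ} (hp₁ : 1 + p ≠ 0) (hp₂ : 2 - p ≠ 0) :
    F₃ p - F₂ p = p * (2 * p - 1) * (1 - p) ^ 4 * (2 - p + 2 * p ^ 2) /
      ((1 + p) * (2 - p) * (2 - 3 * p + 3 * p ^ 2) * (2 - 2 * p + p ^ 2)) := by
  have h₃ := (two_sub_two_mul_add_sq_pos p).ne'
  have h₄ := (two_sub_three_mul_add_three_mul_sq_pos p).ne'
  rw [F₃, F₂, div_sub_div _ _ (by positivity) (by positivity),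
    div_eq_div_iff (by positivity) (by positivity)]
  ring

section Interval

variable {p : ℝ} (h₁ : 1 / 2 ≤ p) (h₂ : p ≤ 1)
include h₁ h₂

lemma F₁_le_F₃ : F₁ p ≤ F₃ p := by
  have hp : 0 ≤ p := by linarith
  have hp₁ : 0 < 1 + p := by linarith
  have hp₂ : 0 < 2 - p := by linarith
  have h₁' : 0 ≤ 2 * p - 1 := by linarith
  have h₂' : 0 ≤ 1 - p := by linarith
  rw [← sub_nonneg, F₃_sub_F₁ hp₁.ne' hp₂.ne']
  have := two_sub_two_mul_add_sq_pos p
  positivity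

lemma F₂_le_F₃ : F₂ p ≤ F₃ p := by
  have hp : 0 ≤ p := by linarith
  have hp₁ : 0 < 1 + p := by linarith
  have hp₂ : 0 < 2 - p := by linarith
  have h₁' : 0 ≤ 2 * p - 1 := by linarith
  rw [← sub_nonneg, F₃_sub_F₂ hp₁.ne' hp₂.ne']
  have := two_sub_two_mul_add_sq_pos p
  have := two_sub_three_mul_add_three_mul_sq_pos p
  have := two_sub_add_two_mul_sq_pos p
  positivity

end Interval

/-- For `1/2 ≤ p ≤ 1`, `S₃` is the most successful of the three strategies, with
all three agreeing at `p = 1/2` where their value is `7/20`. -/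
theorem S3_best_above_half :
    (∀ p : ℝ, 1 / 2 ≤ p → p ≤ 1 → F₁ p ≤ F₃ p ∧ F₂ p ≤ F₃ p) ∧
    F₁ (1 / 2) = 7 / 20 ∧ F₂ (1 / 2) = 7 / 20 ∧ F₃ (1 / 2) = 7 / 20 :=
  ⟨fun _ h₁ h₂ => ⟨F₁_le_F₃ h₁ h₂, F₂_le_F₃ h₁ h₂⟩,
    by norm_num [F₁], by norm_num [F₂], by norm_num [F₃]⟩
end
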